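/- arXiv:2211.05325 — 2 statements merged into one kernel-verified Lean document; each statement's English description precedes it below -/
import Mathlib

section
/- Let G be a simple graph on vertex set {1, …, n} and let k ≤ n. Define the operator H on ℂ^{{0,1}^n} which is diagonal in the computational basis with H e_x = c(x)·e_x, where c(x) is the number of edges {i, j} of G such that x_i = x_j = 1 (equivalently, H = ∑_{{i,j} ∈ E} Π₁^{(i)} Π₁^{(j)}, where Π₁^{(i)} projects the i-th qubit onto 1). Then G has an independent set of size k if and only if there exists a unit vector ψ ∈ ℂ^{{0,1}^n} of weight k with ⟨ψ, Hψ⟩ = 0. -/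
open Matrix

/-- Hamming weight of a bit string. -/
def wt {n : ℕ} (x : Fin n → Bool) : ℕ :=
  (Finset.univ.filter fun i => x i = true).card

/-- The number `c(x)` of edges `{i, j}` of `G` with `x_i = x_j = 1`
(counted via ordered pairs, each edge being counted twice). -/
def edgeCount {n : ℕ} (G : SimpleGraph (Fin n)) [DecidableRel G.Adj]
    (x : Fin n → Bool) : ℕ :=
  (Finset.univ.filter fun p : Fin n × Fin n =>
      G.Adj p.1 p.2 ∧ x p.1 = true ∧ x p.2 = true).card / 2

/-- `G` has an independent set of size `k` iff there is a unit
vector `ψ ∈ ℂ^{{0,1}^n}` of weight `k` with `⟨ψ, Hψ⟩ = 0`, where `H` is the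
diagonal operator `H e_x = c(x) e_x` counting the edges of `G` inside the
support of `x`. -/
theorem stmt_10 (n k : ℕ) (hk : k ≤ n) (G : SimpleGraph (Fin n))
    [DecidableRel G.Adj] :
    (∃ s : Finset (Fin n), s.card = k ∧ ∀ i ∈ s, ∀ j ∈ s, ¬ G.Adj i j) ↔
      (∃ ψ : (Fin n → Bool) → ℂ, star ψ ⬝ᵥ ψ = 1 ∧ (∀ x, wt x ≠ k → ψ x = 0) ∧
        star ψ ⬝ᵥ ((Matrix.diagonal fun x => (edgeCount G x : ℂ)) *ᵥ ψ) = 0) := by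
  constructor
  · rintro ⟨s, hcard, hind⟩
    set x₀ : Fin n → Bool := fun i => decide (i ∈ s) with hx₀
    refine ⟨fun x => if x = x₀ then 1 else 0, ?_, ?_, ?_⟩
    · simp [dotProduct, apply_ite, Finset.sum_ite_eq']
    · intro x hx
      have hwt : wt x₀ = k := by
        rw [← hcard, wt]
        congr 1
        ext i
        simp [hx₀]
      dsimp only
      rw [if_neg]
      intro h
      rw [h, hwt] at hx
      exact hx rfl
    · have hc : edgeCount G x₀ = 0 := by
        rw [edgeCount]
        convert Nat.zero_div 2
        rw [Finset.card_eq_zero, Finset.filter_eq_empty_iff]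
        rintro ⟨i, j⟩ -
        simp only [hx₀, decide_eq_true_eq]
        rintro ⟨hadj, hi, hj⟩
        exact hind i hi j hj hadj
      simp [dotProduct, mulVec_diagonal, apply_ite, Finset.sum_ite_eq', hc]
  · rintro ⟨ψ, h1, h2, h3⟩
    have h3' : ∑ x, (edgeCount G x : ℝ) * Complex.normSq (ψ x) = 0 := by
      have heq : ((∑ x, (edgeCount G x : ℝ) * Complex.normSq (ψ x) : ℝ) : ℂ) = 0 := by
        rw [← h3]
        simp only [dotProduct, mulVec_diagonal, Pi.star_apply, RCLike.star_def]
        push_cast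
        refine Finset.sum_congr rfl fun x _ => ?_
        rw [Complex.normSq_eq_conj_mul_self]
        ring
      exact_mod_cast heq
    have key : ∀ x, ψ x ≠ 0 → edgeCount G x = 0 := by
      intro x hx
      have hterm := (Finset.sum_eq_zero_iff_of_nonneg (fun x _ => mul_nonneg (Nat.cast_nonneg _) (Complex.normSq_nonneg _))).mp h3' x
        (Finset.mem_univ x)
      have hns : Complex.normSq (ψ x) ≠ 0 := fun h => hx (Complex.normSq_eq_zero.mp h)
      have : (edgeCount G x : ℝ) = 0 := by
        rcases mul_eq_zero.mp hterm with h | h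
        · exact h
        · exact absurd h hns
      exact_mod_cast this
    obtain ⟨x, hx⟩ : ∃ x, ψ x ≠ 0 := by
      by_contra h
      push_neg at h
      rw [dotProduct] at h1
      simp [h] at h1
    have hwt : wt x = k := by
      by_contra h
      exact hx (h2 x h)
    refine ⟨Finset.univ.filter fun i => x i = true, hwt, ?_⟩
    intro i hi j hj hadj
    have hc := key x hx
    have hij : i ≠ j := G.ne_of_adj hadj
    simp only [Finset.mem_filter] at hi hj
    have h2le : 2 ≤ (Finset.univ.filter fun p : Fin n × Fin n =>
        G.Adj p.1 p.2 ∧ x p.1 = true ∧ x p.2 = true).card := by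
      refine Finset.one_lt_card.mpr ⟨(i, j), ?_, (j, i), ?_, ?_⟩
      · simp [hadj, hi.2, hj.2]
      · simp [hadj.symm, hi.2, hj.2]
      · simp [hij]
    rw [edgeCount] at hc
    omega
end

section
/- Let ℓ ≤ n, let O be a self-adjoint operator on ℂ^{{0,1}^ℓ} with 0 ≤ O ≤ I, and for each w let O^{(w)} = P^{(w)}_ℓ O P^{(w)}_ℓ (a positive semidefinite operator), with √(O^{(w)}) its positive semidefinite square root. Then for every vector ψ ∈ ℂ^{{0,1}^n} of weight k, ‖ ∑_{w=0}^{min(k,ℓ)} (√(O^{(w)}) ⊗ P^{(k−w)}_{n−ℓ}) ψ ‖² = ⟨ψ, (O ⊗ I) ψ⟩, under the identification of ℂ^{{0,1}^n} with ℂ^{{0,1}^ℓ} ⊗ ℂ^{{0,1}^{n−ℓ}} via e_{xy} ↦ e_x ⊗ e_y. -/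
open Matrix Kronecker ComplexOrder

/-- The weight-`k` projector `P^{(k)}_n` on `n` qubits. -/
noncomputable def Pk (n k : ℕ) : Matrix (Fin n → Bool) (Fin n → Bool) ℂ :=
  Matrix.diagonal fun x => if wt x = k then 1 else 0

/-- The identification `ℂ^{{0,1}^ℓ} ⊗ ℂ^{{0,1}^m} ≅ ℂ^{{0,1}^{ℓ+m}}`. -/
def splitEquiv (l m : ℕ) : ((Fin l → Bool) × (Fin m → Bool)) ≃ (Fin (l + m) → Bool) :=
  (Equiv.sumArrowEquivProdArrow (Fin l) (Fin m) Bool).symm.trans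
    (Equiv.arrowCongr finSumFinEquiv (Equiv.refl Bool))

/-- The identification `ℂ^{{0,1}^ℓ} ⊗ ℂ^{{0,1}^{n-ℓ}} ≅ ℂ^{{0,1}^n}` for `ℓ ≤ n`. -/
def splitEquivLe {l n : ℕ} (h : l ≤ n) :
    ((Fin l → Bool) × (Fin (n - l) → Bool)) ≃ (Fin n → Bool) :=
  (splitEquiv l (n - l)).trans
    (Equiv.arrowCongr (finCongr (Nat.add_sub_cancel' h)) (Equiv.refl Bool))

/-- The square root of a positive semidefinite matrix, as `Matrix.PosSemidef.sqrt` was defined in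
Mathlib (December 2024); it has since been removed from Mathlib. -/
noncomputable def Matrix.PosSemidef.sqrt {n 𝕜 : Type*} [Fintype n] [DecidableEq n] [RCLike 𝕜]
    {A : Matrix n n 𝕜} (hA : A.PosSemidef) : Matrix n n 𝕜 :=
  hA.1.eigenvectorUnitary.1 * diagonal ((↑) ∘ (√·) ∘ hA.1.eigenvalues) *
    (star hA.1.eigenvectorUnitary : Matrix n n 𝕜)

/-! In product coordinates the weight-`k` projector is `Q = ∑_w P^{(w)}_ℓ ⊗ R_w` with
`R_w = P^{(k-w)}_{n-ℓ}`, and the `R_w` (`w ≤ k`) are mutually orthogonal projections. Hence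
`G = ∑_w √(O^{(w)}) ⊗ R_w` satisfies `Gᴴ G = ∑_w O^{(w)} ⊗ R_w = Q (O ⊗ I) Q`, and since
`Q ψ = ψ` we get `‖G ψ‖² = ⟨ψ, Gᴴ G ψ⟩ = ⟨ψ, (O ⊗ I) ψ⟩`. -/

namespace Matrix

theorem sum_kronecker_mul_sum_kronecker {ι α I J : Type*} [CommSemiring α] [Fintype I]
    [Fintype J] [DecidableEq ι] {s : Finset ι} (A B : ι → Matrix I I α) (R : ι → Matrix J J α)
    (hR : ∀ a ∈ s, ∀ b ∈ s, R a * R b = if a = b then R a else 0) :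
    (∑ a ∈ s, A a ⊗ₖ R a) * (∑ b ∈ s, B b ⊗ₖ R b) = ∑ a ∈ s, (A a * B a) ⊗ₖ R a := by
  rw [Finset.sum_mul_sum]
  refine Finset.sum_congr rfl fun a ha => ?_
  rw [Finset.sum_eq_single_of_mem a ha]
  · rw [← mul_kronecker_mul, hR a ha a ha, if_pos rfl]
  · intro b hb hba
    rw [← mul_kronecker_mul, hR a ha b hb, if_neg hba.symm, kronecker_zero]

theorem star_mulVec_dotProduct_mulVec_of_conjTranspose_mul_self {α I : Type*} [CommSemiring α]
    [StarRing α] [Fintype I] {A M P : Matrix I I α} (hP : P.IsHermitian) (hPP : P * P = P)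
    (hA : Aᴴ * A = P * M * P) {v : I → α} (hv : v ∈ Set.range P.mulVec) :
    star (A *ᵥ v) ⬝ᵥ (A *ᵥ v) = star v ⬝ᵥ (M *ᵥ v) := by
  have hPv : P *ᵥ v = v := by
    obtain ⟨u, rfl⟩ := hv
    rw [mulVec_mulVec, hPP]
  calc star (A *ᵥ v) ⬝ᵥ (A *ᵥ v) = star v ⬝ᵥ ((Aᴴ * A) *ᵥ v) := by
        rw [star_mulVec, ← dotProduct_mulVec, mulVec_mulVec]
    _ = star (P *ᵥ v) ⬝ᵥ (M *ᵥ (P *ᵥ v)) := by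
        rw [hA, ← mulVec_mulVec, ← mulVec_mulVec, dotProduct_mulVec, star_mulVec, hP.eq]
    _ = star v ⬝ᵥ (M *ᵥ v) := by rw [hPv]

namespace PosSemidef

variable {n 𝕜 : Type*} [Fintype n] [DecidableEq n] [RCLike 𝕜] {A : Matrix n n 𝕜}

theorem sqrt_isHermitian (hA : A.PosSemidef) : hA.sqrt.IsHermitian := by
  unfold Matrix.PosSemidef.sqrt IsHermitian
  rw [conjTranspose_mul, conjTranspose_mul, star_eq_conjTranspose, conjTranspose_conjTranspose,
    diagonal_conjTranspose, Matrix.mul_assoc]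
  congr 3
  ext i
  simp

theorem sqrt_mul_self (hA : A.PosSemidef) : hA.sqrt * hA.sqrt = A := by
  conv_rhs => rw [hA.1.spectral_theorem, Unitary.conjStarAlgAut_apply]
  unfold Matrix.PosSemidef.sqrt
  have hU : (star hA.1.eigenvectorUnitary : Matrix n n 𝕜) * hA.1.eigenvectorUnitary = 1 :=
    Unitary.coe_star_mul_self _
  simp only [Matrix.mul_assoc]
  rw [← Matrix.mul_assoc (star hA.1.eigenvectorUnitary : Matrix n n 𝕜), hU, Matrix.one_mul,
    ← Matrix.mul_assoc (diagonal _), diagonal_mul_diagonal]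
  congr 3
  ext i
  simp only [Function.comp_apply]
  rw [← RCLike.ofReal_mul, Real.mul_self_sqrt (hA.eigenvalues_nonneg i)]

end PosSemidef

theorem sum_sqrt_kronecker_conjTranspose_mul_self {ι 𝕜 I J : Type*} [RCLike 𝕜] [Fintype I]
    [DecidableEq I] [Fintype J] [DecidableEq J] [DecidableEq ι] {s : Finset ι}
    (P : ι → Matrix I I 𝕜) (R : ι → Matrix J J 𝕜) (O : Matrix I I 𝕜)
    (hO : ∀ a, (P a * O * P a).PosSemidef) (hR : ∀ a, (R a).IsHermitian)
    (hRR : ∀ a ∈ s, ∀ b ∈ s, R a * R b = if a = b then R a else 0) :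
    (∑ a ∈ s, (hO a).sqrt ⊗ₖ R a)ᴴ * (∑ a ∈ s, (hO a).sqrt ⊗ₖ R a) =
      (∑ a ∈ s, P a ⊗ₖ R a) * (O ⊗ₖ (1 : Matrix J J 𝕜)) * (∑ a ∈ s, P a ⊗ₖ R a) := by
  have hherm : (∑ a ∈ s, (hO a).sqrt ⊗ₖ R a)ᴴ = ∑ a ∈ s, (hO a).sqrt ⊗ₖ R a := by
    simp only [conjTranspose_sum, conjTranspose_kronecker, (hO _).sqrt_isHermitian.eq, (hR _).eq]
  have hmulO : (∑ a ∈ s, P a ⊗ₖ R a) * (O ⊗ₖ (1 : Matrix J J 𝕜)) = ∑ a ∈ s, (P a * O) ⊗ₖ R a := by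
    simp only [Finset.sum_mul, ← mul_kronecker_mul, Matrix.mul_one]
  rw [hherm, hmulO, sum_kronecker_mul_sum_kronecker _ _ _ hRR,
    sum_kronecker_mul_sum_kronecker _ _ _ hRR]
  simp only [(hO _).sqrt_mul_self]

end Matrix

theorem wt_comp_equiv {m n : ℕ} (e : Fin m ≃ Fin n) (x : Fin n → Bool) : wt (x ∘ e) = wt x :=
  Finset.card_equiv e (by simp)

theorem wt_le {n : ℕ} (x : Fin n → Bool) : wt x ≤ n :=
  (Finset.card_le_univ _).trans_eq (Fintype.card_fin n)

theorem wt_splitEquiv {l m : ℕ} (x : Fin l → Bool) (y : Fin m → Bool) :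
    wt (splitEquiv l m (x, y)) = wt x + wt y := by
  simp only [wt, Finset.card_filter]
  rw [← Equiv.sum_comp finSumFinEquiv, Fintype.sum_sum_type]
  simp [splitEquiv]

theorem wt_splitEquivLe {l n : ℕ} (h : l ≤ n) (x : Fin l → Bool) (y : Fin (n - l) → Bool) :
    wt (splitEquivLe h (x, y)) = wt x + wt y :=
  (wt_comp_equiv _ _).trans (wt_splitEquiv x y)

theorem Pk_isHermitian (n k : ℕ) : (Pk n k).IsHermitian :=
  isHermitian_diagonal_of_self_adjoint _ (by ext x; split_ifs <;> simp [*])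

theorem Pk_mul_Pk (n a b : ℕ) : Pk n a * Pk n b = if a = b then Pk n a else 0 := by
  rw [Pk, Pk, diagonal_mul_diagonal]
  split_ifs with h
  · subst h
    congr with x
    split_ifs <;> simp
  · rw [← diagonal_zero]
    congr with x
    split_ifs <;> simp_all

theorem Pk_sub_mul_Pk_sub {n k a b : ℕ} (ha : a ≤ k) (hb : b ≤ k) :
    Pk n (k - a) * Pk n (k - b) = if a = b then Pk n (k - a) else 0 := by
  simp only [Pk_mul_Pk, show k - a = k - b ↔ a = b by omega]

theorem Pk_submatrix_splitEquivLe {l n : ℕ} (h : l ≤ n) (k : ℕ) :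
    (Pk n k).submatrix (splitEquivLe h) (splitEquivLe h) =
      ∑ w ∈ Finset.range (min k l + 1), Pk l w ⊗ₖ Pk (n - l) (k - w) := by
  simp only [Pk, submatrix_diagonal_equiv, diagonal_kronecker_diagonal]
  simp only [← diagonalAddMonoidHom_apply, ← map_sum]
  congr 1
  ext ⟨x, y⟩
  simp only [Function.comp_apply, wt_splitEquivLe, Finset.sum_apply, ite_zero_mul, one_mul,
    Finset.sum_ite_eq, Finset.mem_range]
  have := wt_le x
  split_ifs <;> first | rfl | (exfalso; omega)

theorem stmt_11_general (n l k : ℕ) (hl : l ≤ n)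
    (O : Matrix (Fin l → Bool) (Fin l → Bool) ℂ)
    (hOw : ∀ w : ℕ, (Pk l w * O * Pk l w).PosSemidef)
    (ψ : (Fin n → Bool) → ℂ) (hψ : ψ ∈ Set.range (Pk n k).mulVec) :
    star (∑ w ∈ Finset.range (min k l + 1),
        (Matrix.reindex (splitEquivLe hl) (splitEquivLe hl)
          ((hOw w).sqrt ⊗ₖ Pk (n - l) (k - w))) *ᵥ ψ) ⬝ᵥ
      (∑ w ∈ Finset.range (min k l + 1),
        (Matrix.reindex (splitEquivLe hl) (splitEquivLe hl)
          ((hOw w).sqrt ⊗ₖ Pk (n - l) (k - w))) *ᵥ ψ)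
    = star ψ ⬝ᵥ ((Matrix.reindex (splitEquivLe hl) (splitEquivLe hl)
        (O ⊗ₖ (1 : Matrix (Fin (n - l) → Bool) (Fin (n - l) → Bool) ℂ))) *ᵥ ψ) := by
  set e := splitEquivLe hl
  have hR : ∀ a ∈ Finset.range (min k l + 1), ∀ b ∈ Finset.range (min k l + 1),
      Pk (n - l) (k - a) * Pk (n - l) (k - b) = if a = b then Pk (n - l) (k - a) else 0 := by
    intro a ha b hb
    rw [Finset.mem_range] at ha hb
    exact Pk_sub_mul_Pk_sub (by omega) (by omega)
  have hPk : Pk n k = reindex e e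
      (∑ w ∈ Finset.range (min k l + 1), Pk l w ⊗ₖ Pk (n - l) (k - w)) := by
    rw [← Pk_submatrix_splitEquivLe hl, reindex_apply, submatrix_submatrix, Equiv.self_comp_symm,
      submatrix_id_id]
  rw [← sum_mulVec]
  refine star_mulVec_dotProduct_mulVec_of_conjTranspose_mul_self (Pk_isHermitian n k)
    (by rw [Pk_mul_Pk, if_pos rfl]) ?_ hψ
  simp only [← coe_reindexAlgEquiv ℂ ℂ e, ← map_sum]
  rw [hPk, coe_reindexAlgEquiv, conjTranspose_reindex,
    ← coe_reindexAlgEquiv ℂ ℂ e, ← map_mul, ← map_mul, ← map_mul,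
    sum_sqrt_kronecker_conjTranspose_mul_self _ _ _ hOw (fun _ => Pk_isHermitian _ _) hR]

/-- for a self-adjoint `O` with `0 ≤ O ≤ I` on `ℓ ≤ n` qubits,
`O^{(w)} = P^{(w)}_ℓ O P^{(w)}_ℓ` (positive semidefinite, with psd square root
`√(O^{(w)})`), and every vector `ψ` of weight `k`,
`‖ ∑_{w=0}^{min(k,ℓ)} (√(O^{(w)}) ⊗ P^{(k−w)}_{n−ℓ}) ψ ‖² = ⟨ψ, (O ⊗ I) ψ⟩`. -/
theorem stmt_11 (n l k : ℕ) (hl : l ≤ n)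
    (O : Matrix (Fin l → Bool) (Fin l → Bool) ℂ)
    (hO : O.PosSemidef)
    (hO1 : ((1 : Matrix (Fin l → Bool) (Fin l → Bool) ℂ) - O).PosSemidef)
    (hOw : ∀ w : ℕ, (Pk l w * O * Pk l w).PosSemidef)
    (ψ : (Fin n → Bool) → ℂ) (hψ : ψ ∈ Set.range (Pk n k).mulVec) :
    star (∑ w ∈ Finset.range (min k l + 1),
        (Matrix.reindex (splitEquivLe hl) (splitEquivLe hl)
          ((hOw w).sqrt ⊗ₖ Pk (n - l) (k - w))) *ᵥ ψ) ⬝ᵥ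
      (∑ w ∈ Finset.range (min k l + 1),
        (Matrix.reindex (splitEquivLe hl) (splitEquivLe hl)
          ((hOw w).sqrt ⊗ₖ Pk (n - l) (k - w))) *ᵥ ψ)
    = star ψ ⬝ᵥ ((Matrix.reindex (splitEquivLe hl) (splitEquivLe hl)
        (O ⊗ₖ (1 : Matrix (Fin (n - l) → Bool) (Fin (n - l) → Bool) ℂ))) *ᵥ ψ) :=
  stmt_11_general n l k hl O hOw ψ hψ
end
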